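/- Fix A, C, D > 0 and d ∈ ℝ, set 𝕀 = diag(A, C, C) and 𝐈(Γ) = 𝕀 + D·E − D·Γ Γᵀ. For any Ω ∈ ℝ³ and unit vector Γ ∈ ℝ³, put 𝐌 = 𝐈(Γ)Ω + dΓ, F² = (C(A+D) + D(A−C)Γ₁²) Ω₁², and G = (A − C) Ω₁ Γ₁ + C ⟨Ω, Γ⟩. Then the algebraic identity (D G − d C)² − D(A − C) F² = C D (C + D) ⟨𝐈(Γ)Ω, Ω⟩ − C D ⟨𝐌, 𝐌⟩ + C (C + D) d² holds; that is, the product F₃⁺ F₃⁻ of the two nonalgebraic integrals is an affine combination of the energy integral F₁ = ½⟨𝐈(Γ)Ω, Ω⟩ and the integral F₂ = ⟨𝐌, 𝐌⟩. -/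

import Mathlib

open Matrix

/-- The modified inertia operator `𝐈(Γ) = diag(A,B,C) + D·E − D·Γ Γᵀ` of the
spherical ball bearing problem with one ball. -/
noncomputable def modInertia (A B C D : ℝ) (Γ : Fin 3 → ℝ) : Matrix (Fin 3) (Fin 3) ℝ :=
  Matrix.diagonal ![A, B, C] + D • (1 : Matrix (Fin 3) (Fin 3) ℝ) - D • vecMulVec Γ Γ

/-!
With `B = C` the inertia operator is `𝐈(Γ)Ω = (C + D)Ω + (A − C)Ω₁e₁ − D⟨Γ, Ω⟩Γ`
(`e₁ = Pi.single 0 1`), so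
`𝐌 = (C + D)Ω + (A − C)Ω₁e₁ + (d − D⟨Γ, Ω⟩)Γ`. Expanding `⟨𝐈(Γ)Ω, Ω⟩` and `⟨𝐌, 𝐌⟩` by
bilinearity leaves a polynomial identity in `|Ω|²`, `⟨Ω, Γ⟩`, `Ω₁`, `Γ₁` and `|Γ|²`, which
holds once `|Γ|² = 1`.
-/

theorem modInertia_mulVec (A B C D : ℝ) (Γ Ω : Fin 3 → ℝ) :
    modInertia A B C D Γ *ᵥ Ω = diagonal ![A, B, C] *ᵥ Ω + D • Ω - (D * (Γ ⬝ᵥ Ω)) • Γ := by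
  rw [modInertia, sub_mulVec, add_mulVec, smul_mulVec, smul_mulVec, one_mulVec,
    vecMulVec_mulVec, op_smul_eq_smul, smul_smul]

theorem diagonal_mulVec_axisymmetric (A C : ℝ) (Ω : Fin 3 → ℝ) :
    diagonal ![A, C, C] *ᵥ Ω = C • Ω + ((A - C) * Ω 0) • Pi.single 0 1 := by
  ext i
  fin_cases i <;> simp [mulVec_diagonal]
  ring

theorem modInertia_mulVec_axisymmetric (A C D : ℝ) (Γ Ω : Fin 3 → ℝ) :
    modInertia A C C D Γ *ᵥ Ω =
      (C + D) • Ω + ((A - C) * Ω 0) • Pi.single 0 1 - (D * (Γ ⬝ᵥ Ω)) • Γ := by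
  rw [modInertia_mulVec, diagonal_mulVec_axisymmetric, add_smul]
  abel

theorem spherical_ball_bearing_product_of_integrals_general
    (A C D : ℝ) (d : ℝ)
    (Ω Γ : Fin 3 → ℝ) (hΓ : Γ ⬝ᵥ Γ = 1)
    (M : Fin 3 → ℝ) (hM : M = (modInertia A C C D Γ).mulVec Ω + d • Γ)
    (Fsq : ℝ) (hFsq : Fsq = (C * (A + D) + D * (A - C) * Γ 0 ^ 2) * Ω 0 ^ 2)
    (G : ℝ) (hG : G = (A - C) * Ω 0 * Γ 0 + C * (Ω ⬝ᵥ Γ)) :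
    (D * G - d * C) ^ 2 - D * (A - C) * Fsq =
      C * D * (C + D) * ((modInertia A C C D Γ).mulVec Ω ⬝ᵥ Ω)
        - C * D * (M ⬝ᵥ M) + C * (C + D) * d ^ 2 := by
  subst hM hFsq hG
  rw [modInertia_mulVec_axisymmetric]
  have hM_decomp : (C + D) • Ω + ((A - C) * Ω 0) • Pi.single 0 1 - (D * (Γ ⬝ᵥ Ω)) • Γ + d • Γ =
      (C + D) • Ω + ((A - C) * Ω 0) • Pi.single 0 1 + (d - D * (Γ ⬝ᵥ Ω)) • Γ := by
    module
  rw [hM_decomp]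
  simp only [add_dotProduct, sub_dotProduct, dotProduct_add, smul_dotProduct, dotProduct_smul,
    single_dotProduct, dotProduct_single, Pi.add_apply, Pi.smul_apply, smul_eq_mul,
    Pi.single_eq_same, dotProduct_comm Γ Ω, hΓ]
  ring

/-- In the symmetric case `B = C` of the spherical ball bearing
problem, the product `F₃⁺ F₃⁻ = (DG − dC)² − D(A−C)F²` of the two nonalgebraic
integrals is an affine combination of the integrals `F₁ = ½⟨𝐈(Γ)Ω, Ω⟩` and
`F₂ = ⟨𝐌, 𝐌⟩`:
`(DG − dC)² − D(A−C)F² = CD(C+D)⟨𝐈(Γ)Ω, Ω⟩ − CD⟨𝐌, 𝐌⟩ + C(C+D)d²`. -/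
theorem spherical_ball_bearing_product_of_integrals
    (A C D : ℝ) (hA : 0 < A) (hC : 0 < C) (hD : 0 < D) (d : ℝ)
    (Ω Γ : Fin 3 → ℝ) (hΓ : Γ ⬝ᵥ Γ = 1)
    (M : Fin 3 → ℝ) (hM : M = (modInertia A C C D Γ).mulVec Ω + d • Γ)
    (Fsq : ℝ) (hFsq : Fsq = (C * (A + D) + D * (A - C) * Γ 0 ^ 2) * Ω 0 ^ 2)
    (G : ℝ) (hG : G = (A - C) * Ω 0 * Γ 0 + C * (Ω ⬝ᵥ Γ)) :
    (D * G - d * C) ^ 2 - D * (A - C) * Fsq =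
      C * D * (C + D) * ((modInertia A C C D Γ).mulVec Ω ⬝ᵥ Ω)
        - C * D * (M ⬝ᵥ M) + C * (C + D) * d ^ 2 :=
  spherical_ball_bearing_product_of_integrals_general A C D d Ω Γ hΓ M hM Fsq hFsq G hG
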